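/- arXiv:2310.02647 — 6 statements merged into one kernel-verified Lean document; each statement's English description precedes it below -/
import Mathlib

section
/- For a set X with an endofunction f : X → X, if X is nonempty and for all x, y ∈ X there exist natural numbers n, m with f^n(x) = f^m(y), then X cannot be written as a disjoint union of two nonempty f-invariant subsets (i.e., subsets S with f(S) ⊆ S). -/
open Set

theorem Set.MapsTo.not_disjoint_of_iterate_eq {X : Type*} {f : X → X} {S T : Set X}
    (hS : MapsTo f S S) (hT : MapsTo f T T) {s t : X} (hs : s ∈ S) (ht : t ∈ T) {n m : ℕ}
    (h : f^[n] s = f^[m] t) : ¬ Disjoint S T :=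
  fun hdisj ↦ hdisj.ne_of_mem (hS.iterate n hs) (hT.iterate m ht) h

theorem stmt_0_general {X : Type*} (f : X → X)
    (hconn : ∀ x y : X, ∃ n m : ℕ, f^[n] x = f^[m] y) :
    ¬ ∃ S T : Set X, S.Nonempty ∧ T.Nonempty ∧
      (∀ x ∈ S, f x ∈ S) ∧ (∀ x ∈ T, f x ∈ T) ∧
      Disjoint S T ∧ S ∪ T = Set.univ := by
  rintro ⟨S, T, ⟨s, hs⟩, ⟨t, ht⟩, hS, hT, hdisj, -⟩
  obtain ⟨n, m, h⟩ := hconn s t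
  exact MapsTo.not_disjoint_of_iterate_eq hS hT hs ht h hdisj

theorem stmt_0 {X : Type*} (f : X → X) (hne : Nonempty X)
    (hconn : ∀ x y : X, ∃ n m : ℕ, f^[n] x = f^[m] y) :
    ¬ ∃ S T : Set X, S.Nonempty ∧ T.Nonempty ∧
      (∀ x ∈ S, f x ∈ S) ∧ (∀ x ∈ T, f x ∈ T) ∧
      Disjoint S T ∧ S ∪ T = Set.univ :=
  stmt_0_general f hconn
end

section
/- For a set X with an endofunction f : X → X, if X cannot be written as a disjoint union of two nonempty f-invariant subsets and X is nonempty, then for all x, y ∈ X there exist natural numbers n, m with f^n(x) = f^m(y). -/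
def orbitMeetSet {X : Type*} (f : X → X) (x : X) : Set X :=
  {z | ∃ n m : ℕ, f^[n] z = f^[m] x}

theorem self_mem_orbitMeetSet {X : Type*} (f : X → X) (x : X) : x ∈ orbitMeetSet f x :=
  ⟨0, 0, rfl⟩

theorem apply_mem_orbitMeetSet_iff {X : Type*} (f : X → X) (x z : X) :
    f z ∈ orbitMeetSet f x ↔ z ∈ orbitMeetSet f x := by
  constructor
  · rintro ⟨n, m, h⟩
    exact ⟨n + 1, m, by rwa [Function.iterate_succ_apply]⟩
  · rintro ⟨n, m, h⟩
    refine ⟨n, m + 1, ?_⟩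
    rw [← Function.iterate_succ_apply, Function.iterate_succ_apply', h,
      Function.iterate_succ_apply']

theorem stmt_1_general {X : Type*} (f : X → X)
    (hnosplit : ¬ ∃ S T : Set X, S.Nonempty ∧ T.Nonempty ∧
      (∀ x ∈ S, f x ∈ S) ∧ (∀ x ∈ T, f x ∈ T) ∧
      Disjoint S T ∧ S ∪ T = Set.univ) :
    ∀ x y : X, ∃ n m : ℕ, f^[n] x = f^[m] y := by
  intro x y
  by_contra hxy
  have hy : y ∉ orbitMeetSet f x := fun ⟨n, m, h⟩ => hxy ⟨m, n, h.symm⟩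
  exact hnosplit ⟨orbitMeetSet f x, (orbitMeetSet f x)ᶜ,
    ⟨x, self_mem_orbitMeetSet f x⟩, ⟨y, hy⟩,
    fun z hz => (apply_mem_orbitMeetSet_iff f x z).2 hz,
    fun z hz => mt (apply_mem_orbitMeetSet_iff f x z).1 hz,
    disjoint_compl_right, Set.union_compl_self _⟩

theorem stmt_1 {X : Type*} (f : X → X) (hne : Nonempty X)
    (hnosplit : ¬ ∃ S T : Set X, S.Nonempty ∧ T.Nonempty ∧
      (∀ x ∈ S, f x ∈ S) ∧ (∀ x ∈ T, f x ∈ T) ∧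
      Disjoint S T ∧ S ∪ T = Set.univ) :
    ∀ x y : X, ∃ n m : ℕ, f^[n] x = f^[m] y :=
  stmt_1_general f hnosplit
end

section
/- Let M be a commutative monoid and φ : ℕ → M a monoid homomorphism with x = φ(1). If φ is an epimorphism of monoids, then x is quasi-absorbing: for every y ∈ M there exist n, m ∈ ℕ with y * x^n = x^m. -/
noncomputable section StmtAux

/-- The monoid structure on `Prop` with `∧` as multiplication and `True` as unit. -/
instance propCommMonoid : CommMonoid Prop where
  mul a b := a ∧ b
  one := True
  mul_assoc a b c := propext and_assoc
  one_mul a := true_and _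
  mul_one a := and_true _
  mul_comm a b := propext and_comm

end StmtAux

theorem stmt_7 {M : Type*} [CommMonoid M] (φ : Multiplicative ℕ →* M)
    (x : M) (hx : x = φ (Multiplicative.ofAdd 1))
    (hepi : ∀ (M' : Type*) [Monoid M'] (f g : M →* M'),
      f.comp φ = g.comp φ → f = g) :
    ∀ y : M, ∃ n m : ℕ, y * x ^ n = x ^ m := by
  classical
  have key : ∀ a : Multiplicative ℕ, φ a = x ^ (Multiplicative.toAdd a) := by
    intro a
    have h1 : a = (Multiplicative.ofAdd 1) ^ (Multiplicative.toAdd a) := by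
      simp [← ofAdd_nsmul]
    conv_lhs => rw [h1]
    rw [map_pow, ← hx]
  -- Step 1: every element divides a power of `x`.
  have step1 : ∀ z : M, ∃ u : M, ∃ m : ℕ, z * u = x ^ m := by
    let f1 : M →* ULift Prop :=
      { toFun := fun z => ⟨∃ u : M, ∃ m : ℕ, z * u = x ^ m⟩
        map_one' := by
          show ULift.up _ = ULift.up True
          refine congrArg ULift.up (propext ⟨fun _ => trivial, fun _ => ⟨1, 0, by simp⟩⟩)
        map_mul' := by
          intro z w
          show ULift.up _ = ULift.up (_ ∧ _)
          refine congrArg ULift.up (propext ⟨?_, ?_⟩)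
          · rintro ⟨u, m, h⟩
            exact ⟨⟨w * u, m, by rw [← mul_assoc]; exact h⟩,
              ⟨z * u, m, by rw [← mul_assoc, mul_comm w z]; exact h⟩⟩
          · rintro ⟨⟨u, m, hu⟩, ⟨v, l, hv⟩⟩
            refine ⟨u * v, m + l, ?_⟩
            calc z * w * (u * v) = (z * u) * (w * v) := by
                  rw [mul_mul_mul_comm]
              _ = x ^ m * x ^ l := by rw [hu, hv]
              _ = x ^ (m + l) := (pow_add x m l).symm
        }
    have hcomp : f1.comp φ = (1 : M →* ULift Prop).comp φ := by
      refine MonoidHom.ext fun a => ?_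
      show ULift.up _ = (1 : M →* ULift Prop) (φ a)
      show ULift.up _ = ULift.up True
      refine congrArg ULift.up (propext ⟨fun _ => trivial, fun _ => ?_⟩)
      exact ⟨1, Multiplicative.toAdd a, by rw [mul_one, key]⟩
    have hfg := hepi _ f1 (1 : M →* ULift Prop) hcomp
    intro z
    have h2 : f1 z = 1 := by rw [hfg]; rfl
    have h3 : (∃ u : M, ∃ m : ℕ, z * u = x ^ m) = True := congrArg ULift.down h2
    exact of_eq_true h3
  -- Step 2: the quotient by the congruence `a ~ b ↔ ∃ n m, a xⁿ = b xᵐ` is a group,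
  -- and characters into ℚ/ℤ separate its points.
  set c : Con M :=
    { r := fun a b => ∃ n m : ℕ, a * x ^ n = b * x ^ m
      iseqv := by
        constructor
        · intro a; exact ⟨0, 0, rfl⟩
        · rintro a b ⟨n, m, h⟩; exact ⟨m, n, h.symm⟩
        · rintro a b cc ⟨n, m, h1⟩ ⟨k, l, h2⟩
          refine ⟨n + k, l + m, ?_⟩
          calc a * x ^ (n + k) = a * x ^ n * x ^ k := by rw [pow_add, mul_assoc]
            _ = b * x ^ m * x ^ k := by rw [h1]
            _ = b * x ^ k * x ^ m := by rw [mul_right_comm]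
            _ = cc * x ^ l * x ^ m := by rw [h2]
            _ = cc * x ^ (l + m) := by rw [pow_add, mul_assoc]
      mul' := by
        rintro a b p q ⟨n, m, h1⟩ ⟨k, l, h2⟩
        refine ⟨n + k, m + l, ?_⟩
        calc a * p * x ^ (n + k)
            = (a * x ^ n) * (p * x ^ k) := by rw [pow_add, mul_mul_mul_comm]
          _ = (b * x ^ m) * (q * x ^ l) := by rw [h1, h2]
          _ = b * q * x ^ (m + l) := by rw [pow_add, mul_mul_mul_comm] } with hc
  have hx1 : ((x : c.Quotient)) = 1 := by
    show ((x : c.Quotient)) = ((1 : M) : c.Quotient)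
    exact c.eq.mpr ⟨0, 1, by simp⟩
  have hunit : ∀ t : c.Quotient, IsUnit t := by
    intro t
    refine Con.induction_on t fun z => ?_
    obtain ⟨u, m, hu⟩ := step1 z
    refine IsUnit.of_mul_eq_one (a := (z : c.Quotient)) (↑u) ?_
    calc ((z : c.Quotient)) * ↑u = ((z * u : M) : c.Quotient) := rfl
      _ = ((x ^ m : M) : c.Quotient) := by rw [hu]
      _ = ((x : c.Quotient)) ^ m := map_pow c.mk' x m
      _ = 1 := by rw [hx1, one_pow]
  intro y
  by_contra hcon
  push_neg at hcon
  have hy1 : ((y : c.Quotient)) ≠ 1 := by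
    intro h
    have h' : ((y : c.Quotient)) = ((1 : M) : c.Quotient) := h
    obtain ⟨n, m, hnm⟩ := c.eq.mp h'
    exact hcon n m (by simpa using hnm)
  -- the canonical hom from the quotient into its group of units
  let unitize : c.Quotient →* (c.Quotient)ˣ :=
    { toFun := fun t => (hunit t).unit
      map_one' := Units.ext (by simp)
      map_mul' := fun t s => Units.ext (by simp) }
  let a : Additive (c.Quotient)ˣ := Additive.ofMul (unitize y)
  have ha : a ≠ 0 := by
    intro h
    apply hy1
    have h1 : unitize (y : c.Quotient) = 1 := h
    have := congrArg Units.val h1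
    simpa [unitize] using this
  obtain ⟨χ, hχ⟩ := CharacterModule.exists_character_apply_ne_zero_of_ne_zero ha
  let chom : (c.Quotient)ˣ →* Multiplicative (AddCircle (1 : ℚ)) :=
    { toFun := fun g => Multiplicative.ofAdd (χ (Additive.ofMul g))
      map_one' := by simp
      map_mul' := by
        intro g h
        show Multiplicative.ofAdd (χ (Additive.ofMul g + Additive.ofMul h)) = _
        rw [map_add]
        rfl }
  let f2 : M →* ULift (Multiplicative (AddCircle (1 : ℚ))) :=
    (MulEquiv.ulift.symm.toMonoidHom).comp ((chom.comp unitize).comp c.mk')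
  have hcomp2 : f2.comp φ = (1 : M →* ULift (Multiplicative (AddCircle (1 : ℚ)))).comp φ := by
    refine MonoidHom.ext fun b => ?_
    show MulEquiv.ulift.symm (chom (unitize (c.mk' (φ b)))) = 1
    have h1 : c.mk' (φ b) = 1 := by
      rw [key b]
      show ((x ^ Multiplicative.toAdd b : M) : c.Quotient) = 1
      rw [show ((x ^ Multiplicative.toAdd b : M) : c.Quotient)
          = ((x : c.Quotient)) ^ Multiplicative.toAdd b from map_pow c.mk' x _, hx1, one_pow]
    rw [h1, map_one, map_one, map_one]
  have hfg2 := hepi _ f2 (1 : M →* ULift (Multiplicative (AddCircle (1 : ℚ)))) hcomp2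
  have h4 : f2 y = 1 := by rw [hfg2]; rfl
  have h5 : chom (unitize (y : c.Quotient)) = 1 := by
    have := congrArg MulEquiv.ulift h4
    simpa [f2] using this
  exact hχ (by simpa [chom] using h5)
end

section
/- Let M be a commutative monoid and φ : ℕ → M a monoid homomorphism with x = φ(1). If x is quasi-invertible (for every y ≠ 1 in M there exists y' with y' * x = y) and quasi-absorbing (for every y in M there exist n, m with y * x^n = x^m), then φ is an epimorphism in the category of monoids. -/
/-!
Two homomorphisms `f g` that agree on `φ` agree on every power of `x`. By quasi-absorption
`y * x ^ n = x ^ m` for some `n, m`, and peeling off factors `x` with quasi-invertibility shows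
that `y` is either a power of `x` or a multiple `z * x ^ m`. In the second case the zigzag
`f y = f z * g (x ^ n * y) = f (z * x ^ n) * g y` together with `g y = g (x ^ m) * g z` and
`z * x ^ n * x ^ m = x ^ m` forces `f y = g y`.
-/

theorem MonoidHom.eq_of_zigzag {M M' : Type*} [CommMonoid M] [Monoid M'] {f g : M →* M'}
    {s t y z : M} (hs : f s = g s) (ht : f t = g t) (hy : y = z * s) (hyt : y * t = s) :
    f y = g y := by
  have hf : f y = f (z * t) * g y :=
    calc f y = f z * g s := by rw [hy, map_mul, hs]
      _ = f z * g (t * y) := by rw [← hyt, mul_comm]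
      _ = f (z * t) * g y := by rw [map_mul g, ← ht, map_mul f, mul_assoc]
  have hg : g y = f s * g z := by rw [hy, mul_comm, map_mul, hs]
  have hzts : z * t * s = s := by rw [mul_right_comm, ← hy, hyt]
  rw [hf, hg, ← mul_assoc, ← map_mul, hzts]

theorem exists_eq_pow_or_exists_eq_mul_pow {M : Type*} [Monoid M] {x : M}
    (hx : ∀ y : M, y ≠ 1 → ∃ y' : M, y' * x = y) (y : M) (k : ℕ) :
    (∃ j : ℕ, y = x ^ j) ∨ ∃ z : M, y = z * x ^ k := by
  induction k with
  | zero => exact Or.inr ⟨y, by rw [pow_zero, mul_one]⟩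
  | succ k ih =>
    obtain hpow | ⟨z, rfl⟩ := ih
    · exact Or.inl hpow
    · by_cases hz : z = 1
      · exact Or.inl ⟨k, by rw [hz, one_mul]⟩
      · obtain ⟨z', rfl⟩ := hx z hz
        exact Or.inr ⟨z', by rw [pow_succ', mul_assoc]⟩

theorem stmt_8 {M : Type*} [CommMonoid M] (φ : Multiplicative ℕ →* M)
    (x : M) (hx : x = φ (Multiplicative.ofAdd 1))
    (hqinv : ∀ y : M, y ≠ 1 → ∃ y' : M, y' * x = y)
    (hqabs : ∀ y : M, ∃ n m : ℕ, y * x ^ n = x ^ m) :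
    ∀ (M' : Type*) [Monoid M'] (f g : M →* M'),
      f.comp φ = g.comp φ → f = g := by
  intro M' _ f g hφ
  have hpow (k : ℕ) : f (x ^ k) = g (x ^ k) := by
    rw [map_pow, map_pow, hx]
    exact congrArg (· ^ k) (DFunLike.congr_fun hφ _)
  ext y
  obtain ⟨n, m, hyx⟩ := hqabs y
  obtain ⟨j, rfl⟩ | ⟨z, hz⟩ := exists_eq_pow_or_exists_eq_mul_pow hqinv y m
  · exact hpow j
  · exact MonoidHom.eq_of_zigzag (hpow m) (hpow n) hz hyx
end

section
/- The monoid M(a, 0) defined as the submonoid of M(a,1) × ℤ consisting of elements {([i], i) : i ∈ ℕ} ∪ {([a], j) : j ∈ ℤ} is generated by the two elements x = ([1], 1) and y = ([a], −1), and these satisfy the relations x·y = y·x, x^(a+1)·y = x^a, and x·y² = y. -/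
/-- The congruence on the additive monoid ℕ identifying all `n, m ≥ a`. -/
def conA (a : ℕ) : AddCon ℕ where
  r n m := n = m ∨ (a ≤ n ∧ a ≤ m)
  iseqv := { refl := fun _ => Or.inl rfl
             symm := fun h => by omega
             trans := fun h1 h2 => by omega }
  add' := fun {w x y z} h1 h2 => by
    rcases h1 with h1 | h1 <;> rcases h2 with h2 | h2 <;> [skip; skip; skip; skip] <;>
      first | exact Or.inl (by omega) | exact Or.inr (by omega)

/-- `M(a,0)`, the submonoid of `M(a,1) × ℤ` with elements `([i], i)` for `i : ℕ`
and `([a], j)` for `j : ℤ`. -/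
def Mzero (a : ℕ) : AddSubmonoid ((conA a).Quotient × ℤ) where
  carrier := {p | (∃ i : ℕ, p = ((conA a).mk' i, (i : ℤ))) ∨
                  (∃ j : ℤ, p = ((conA a).mk' a, j))}
  zero_mem' := Or.inl ⟨0, by simp <;> rfl⟩
  add_mem' := by
    rintro p q (⟨i, rfl⟩ | ⟨j, rfl⟩) (⟨i', rfl⟩ | ⟨j', rfl⟩)
    · exact Or.inl ⟨i + i', by simp [Prod.ext_iff, ← map_add]⟩
    · refine Or.inr ⟨(i : ℤ) + j', ?_⟩
      have h1 : (conA a).mk' i + (conA a).mk' a = (conA a).mk' a := by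
        rw [← map_add]
        exact (AddCon.eq _).mpr (Or.inr ⟨by omega, le_refl a⟩)
      exact Prod.ext h1 rfl
    · refine Or.inr ⟨j + (i' : ℤ), ?_⟩
      have h1 : (conA a).mk' a + (conA a).mk' i' = (conA a).mk' a := by
        rw [← map_add]
        exact (AddCon.eq _).mpr (Or.inr ⟨by omega, le_refl a⟩)
      exact Prod.ext h1 rfl
    · refine Or.inr ⟨j + j', ?_⟩
      have h1 : (conA a).mk' a + (conA a).mk' a = (conA a).mk' a := by
        rw [← map_add]
        exact (AddCon.eq _).mpr (Or.inr ⟨by omega, le_refl a⟩)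
      exact Prod.ext h1 rfl

theorem stmt_14 (a : ℕ) :
    let x : (conA a).Quotient × ℤ := ((conA a).mk' 1, (1 : ℤ))
    let y : (conA a).Quotient × ℤ := ((conA a).mk' a, (-1 : ℤ))
    AddSubmonoid.closure {x, y} = Mzero a ∧
    x + y = y + x ∧
    (a + 1) • x + y = a • x ∧
    x + 2 • y = y := by
  intro x y
  have hmk : ∀ n m : ℕ, a ≤ n → a ≤ m → (conA a).mk' n = (conA a).mk' m := by
    intro n m hn hm
    exact (AddCon.eq _).mpr (Or.inr ⟨hn, hm⟩)
  have hx : ∀ m : ℕ, m • x = ((conA a).mk' m, (m : ℤ)) := by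
    intro m
    simp only [x, Prod.smul_mk, ← map_nsmul, smul_eq_mul, mul_one, nsmul_eq_mul]
  have hy : ∀ n : ℕ, n • y = ((conA a).mk' (n * a), -(n : ℤ)) := by
    intro n
    simp only [y, Prod.smul_mk, ← map_nsmul, smul_eq_mul, nsmul_eq_mul, mul_neg_one]
  refine ⟨?_, add_comm x y, ?_, ?_⟩
  · apply le_antisymm
    · rw [AddSubmonoid.closure_le]
      rintro p (rfl | rfl)
      · exact Or.inl ⟨1, by simp [x]⟩
      · exact Or.inr ⟨-1, rfl⟩
    · rintro p (⟨i, rfl⟩ | ⟨j, rfl⟩)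
      · have := AddSubmonoid.nsmul_mem _ (AddSubmonoid.subset_closure
          (show x ∈ ({x, y} : Set _) from Or.inl rfl)) i
        rwa [hx] at this
      · set n : ℕ := j.natAbs + a + 1 with hn
        have hj : 0 ≤ j + n := by
          have := Int.natAbs_eq j
          omega
        set m : ℕ := (j + n).toNat with hm
        have hxm := AddSubmonoid.nsmul_mem _ (AddSubmonoid.subset_closure
          (show x ∈ ({x, y} : Set _) from Or.inl rfl)) m
        have hyn := AddSubmonoid.nsmul_mem _ (AddSubmonoid.subset_closure
          (show y ∈ ({x, y} : Set _) from Or.inr rfl)) n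
        have hsum := AddSubmonoid.add_mem _ hxm hyn
        rw [hx, hy] at hsum
        have h1 : ((conA a).mk' m, (m : ℤ)) + ((conA a).mk' (n * a), -(n : ℤ))
            = ((conA a).mk' a, j) := by
          have hcomp : (conA a).mk' m + (conA a).mk' (n * a) = (conA a).mk' a := by
            rw [← map_add]
            apply hmk
            · rcases Nat.eq_zero_or_pos a with h0 | h0
              · omega
              · calc a ≤ n * a := Nat.le_mul_of_pos_left a (by omega)
                  _ ≤ m + n * a := Nat.le_add_left _ _
            · exact le_refl a
          have hz : (m : ℤ) + -(n : ℤ) = j := by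
            have : (m : ℤ) = j + n := by
              rw [hm]; exact Int.toNat_of_nonneg hj
            omega
          exact Prod.ext hcomp hz
        rwa [h1] at hsum
  · have h2 : ((a + 1) • x + y).1 = (a • x).1 := by
      rw [hx, hx]
      show (conA a).mk' (a + 1) + (conA a).mk' a = (conA a).mk' a
      rw [← map_add]
      exact hmk _ _ (by omega) (le_refl a)
    have h3 : ((a + 1) • x + y).2 = (a • x).2 := by
      rw [hx, hx]
      show ((a : ℤ) + 1) + -1 = (a : ℤ)
      ring
    exact Prod.ext h2 h3
  · have h2 : (x + 2 • y).1 = y.1 := by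
      rw [hy]
      show (conA a).mk' 1 + (conA a).mk' (2 * a) = (conA a).mk' a
      rw [← map_add]
      exact hmk _ _ (by omega) (le_refl a)
    have h3 : (x + 2 • y).2 = y.2 := by
      rw [hy]
      show (1 : ℤ) + -(2 : ℕ) = -1
      norm_num
    exact Prod.ext h2 h3
end

section
/- In the monoid presented by generators x, y and relations xy = yx, x^(a+1)y = x^a, xy² = y (for a fixed a ∈ ℕ), every element equals x^k for some k ≥ 0, or y^k for some k > 0, or x^k·y for some 0 < k ≤ a. -/
/-- The three defining relations `xy = yx`, `x^(a+1) y = x^a`, `x y² = y`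
on the free monoid on two generators. -/
def presRel (a : ℕ) : FreeMonoid (Fin 2) → FreeMonoid (Fin 2) → Prop := fun u v =>
  (u = FreeMonoid.of 0 * FreeMonoid.of 1 ∧ v = FreeMonoid.of 1 * FreeMonoid.of 0) ∨
  (u = (FreeMonoid.of 0) ^ (a + 1) * FreeMonoid.of 1 ∧ v = (FreeMonoid.of 0) ^ a) ∨
  (u = FreeMonoid.of 0 * (FreeMonoid.of 1) ^ 2 ∧ v = FreeMonoid.of 1)

theorem stmt_15 (a : ℕ) :
    ∀ m : (conGen (presRel a)).Quotient,
      (∃ k : ℕ, m = ((conGen (presRel a)).mk' (FreeMonoid.of 0)) ^ k) ∨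
      (∃ k : ℕ, 0 < k ∧ m = ((conGen (presRel a)).mk' (FreeMonoid.of 1)) ^ k) ∨
      (∃ k : ℕ, 0 < k ∧ k ≤ a ∧
        m = ((conGen (presRel a)).mk' (FreeMonoid.of 0)) ^ k *
            (conGen (presRel a)).mk' (FreeMonoid.of 1)) := by
  set C := conGen (presRel a) with hC
  set X := C.mk' (FreeMonoid.of 0) with hX
  set Y := C.mk' (FreeMonoid.of 1) with hY
  -- the three relations, transported to the quotient
  have hq : ∀ u v : FreeMonoid (Fin 2), presRel a u v → C.mk' u = C.mk' v := by
    intro u v h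
    exact (Con.eq _).mpr (ConGen.Rel.of _ _ h)
  have rXY : X * Y = Y * X := by
    have := hq _ _ (Or.inl ⟨rfl, rfl⟩ : presRel a _ _)
    simpa [map_mul, hX, hY] using this
  have rA : X ^ (a + 1) * Y = X ^ a := by
    have := hq _ _ (Or.inr (Or.inl ⟨rfl, rfl⟩) : presRel a _ _)
    simpa [map_mul, map_pow, hX, hY] using this
  have rYY : X * Y ^ 2 = Y := by
    have := hq _ _ (Or.inr (Or.inr ⟨rfl, rfl⟩) : presRel a _ _)
    simpa [map_mul, map_pow, hX, hY] using this
  have comm : ∀ k : ℕ, Y * X ^ k = X ^ k * Y := by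
    intro k
    have c1 : Commute X Y := rXY
    exact (c1.symm.pow_right k).eq
  -- X^k * Y for k > a collapses
  have hbig : ∀ k : ℕ, a < k → X ^ k * Y = X ^ (k - 1) := by
    intro k hk
    have h1 : X ^ k * Y = X ^ (k - (a + 1)) * (X ^ (a + 1) * Y) := by
      rw [← mul_assoc, ← pow_add, Nat.sub_add_cancel hk]
    rw [h1, rA, ← pow_add]
    congr 1
    omega
  -- master case: X^k * Y is always in one of the three forms
  have hmain : ∀ k : ℕ,
      (∃ k' : ℕ, X ^ k * Y = X ^ k') ∨
      (∃ k' : ℕ, 0 < k' ∧ X ^ k * Y = Y ^ k') ∨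
      (∃ k' : ℕ, 0 < k' ∧ k' ≤ a ∧ X ^ k * Y = X ^ k' * Y) := by
    intro k
    rcases Nat.eq_zero_or_pos k with rfl | hk
    · right; left; exact ⟨1, one_pos, by simp⟩
    rcases le_or_gt k a with hka | hka
    · right; right; exact ⟨k, hk, hka, rfl⟩
    · left; exact ⟨k - 1, hbig k hka⟩
  intro m
  obtain ⟨w, rfl⟩ := C.mk'_surjective m
  induction w using FreeMonoid.inductionOn' with
  | one =>
    left; exact ⟨0, by simp⟩
  | of_mul g w ih =>
    rw [map_mul]
    have hg : g = 0 ∨ g = 1 := by omega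
    rcases ih with ⟨k, hw⟩ | ⟨k, hk, hw⟩ | ⟨k, hk, hka, hw⟩
    · rw [hw]
      rcases hg with rfl | rfl
      · rw [← hX]
        left; exact ⟨k + 1, by rw [pow_succ']⟩
      · rw [← hY, comm k]
        exact hmain k
    · rw [hw]
      rcases hg with rfl | rfl
      · rw [← hX]
        rcases Nat.lt_or_ge k 2 with h2 | h2
        · interval_cases k
          rw [show X * Y ^ 1 = X ^ 1 * Y by rw [pow_one, pow_one]]
          exact hmain 1
        · obtain ⟨l, rfl⟩ : ∃ l, k = l + 2 := ⟨k - 2, by omega⟩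
          right; left
          refine ⟨l + 1, by omega, ?_⟩
          have h3 : X * Y ^ (l + 2) = (X * Y ^ 2) * Y ^ l := by
            rw [mul_assoc, ← pow_add, add_comm]
          rw [h3, rYY, ← pow_succ']
      · rw [← hY]
        right; left
        exact ⟨k + 1, Nat.succ_pos _, by rw [pow_succ']⟩
    · rw [hw]
      rcases hg with rfl | rfl
      · rw [← hX, ← mul_assoc, ← pow_succ']
        exact hmain (k + 1)
      · rw [← hY]
        obtain ⟨l, rfl⟩ : ∃ l, k = l + 1 := ⟨k - 1, by omega⟩
        have h1 : Y * (X ^ (l + 1) * Y) = X ^ l * Y := by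
          rw [← mul_assoc, comm (l + 1), mul_assoc,
            show Y * Y = Y ^ 2 from (sq Y).symm,
            pow_succ, mul_assoc, rYY]
        rw [h1]
        exact hmain l
end
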